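/- For every finite simple graph G on n ≥ 1 vertices, n ≤ αod(G) · χso(G) ≤ (n+1)²/4. -/

import Mathlib

open Finset

section OddIndepDefs

variable {V : Type*} [Fintype V] [DecidableEq V]

/-- `S` is an odd independent set in `G`: `S` is independent and every vertex outside `S`
has either no neighbor in `S` or an odd number of neighbors in `S`. -/
def IsOddIndepSet (G : SimpleGraph V) [DecidableRel G.Adj] (S : Finset V) : Prop :=
  (∀ u ∈ S, ∀ v ∈ S, ¬ G.Adj u v) ∧
  ∀ v ∉ S, (S.filter fun u => G.Adj v u) = ∅ ∨ Odd (S.filter fun u => G.Adj v u).card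

/-- The odd independence number: the largest size of an odd independent set. -/
noncomputable def oddIndepNum (G : SimpleGraph V) [DecidableRel G.Adj] : ℕ :=
  sSup {k | ∃ S : Finset V, IsOddIndepSet G S ∧ S.card = k}

/-- The independence number: the largest size of an independent set. -/
noncomputable def indepNum (G : SimpleGraph V) : ℕ :=
  sSup {k | ∃ S : Finset V, (∀ u ∈ S, ∀ v ∈ S, ¬ G.Adj u v) ∧ S.card = k}

/-- A strong odd coloring with `n` colors: a proper coloring such that for every vertex `v`,
every color appearing in the open neighborhood of `v` appears there an odd number of times. -/
def IsStrongOddColoring (G : SimpleGraph V) [DecidableRel G.Adj] {n : ℕ} (c : V → Fin n) : Prop :=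
  (∀ u v, G.Adj u v → c u ≠ c v) ∧
  ∀ v : V, ∀ k : Fin n,
    (univ.filter fun u => G.Adj v u ∧ c u = k) = ∅ ∨
    Odd (univ.filter fun u => G.Adj v u ∧ c u = k).card

/-- The strong odd chromatic number: minimum number of colors of a strong odd coloring. -/
noncomputable def strongOddChromNum (G : SimpleGraph V) [DecidableRel G.Adj] : ℕ :=
  sInf {n | ∃ c : V → Fin n, IsStrongOddColoring G c}

/-- The chromatic number, as a natural number. -/
noncomputable def chromNum (G : SimpleGraph V) : ℕ :=
  sInf {n | ∃ c : V → Fin n, ∀ u v, G.Adj u v → c u ≠ c v}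

/-- The square of a graph: two distinct vertices are adjacent iff they are at distance at most 2,
i.e. adjacent or having a common neighbor. -/
def graphSquare (G : SimpleGraph V) : SimpleGraph V where
  Adj u v := u ≠ v ∧ (G.Adj u v ∨ ∃ w, G.Adj u w ∧ G.Adj w v)
  symm := by
    refine ⟨?_⟩
    intro u v h
    refine ⟨h.1.symm, ?_⟩
    rcases h.2 with h' | ⟨w, h1, h2⟩
    · exact Or.inl h'.symm
    · exact Or.inr ⟨w, h2.symm, h1.symm⟩
  loopless := ⟨fun v h => h.1 rfl⟩

instance (G : SimpleGraph V) [DecidableRel G.Adj] : DecidableRel (graphSquare G).Adj :=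
  fun u v => inferInstanceAs (Decidable (u ≠ v ∧ (G.Adj u v ∨ ∃ w, G.Adj u w ∧ G.Adj w v)))

end OddIndepDefs

/-! The colour classes of a strong odd colouring are odd independent sets, so
`n ≤ αod · χso`. Conversely an odd independent set `S`, together with the singletons of the
remaining vertices, is the colour partition of a strong odd colouring with `n - |S| + 1`
colours, so `αod + χso ≤ n + 1`, and `αod · χso ≤ (n + 1)² / 4` by AM–GM. -/

lemma Finset.eq_empty_or_odd_card_of_card_le_one {α : Type*} {s : Finset α} (hs : s.card ≤ 1) :
    s = ∅ ∨ Odd s.card := by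
  rcases s.eq_empty_or_nonempty with h | h
  · exact Or.inl h
  · exact Or.inr (by rw [le_antisymm hs h.card_pos]; exact odd_one)

lemma mul_le_sq_div_four_of_add_le {a b N : ℝ} (ha : 0 ≤ a) (hb : 0 ≤ b) (h : a + b ≤ N) :
    a * b ≤ N ^ 2 / 4 := by
  nlinarith [sq_nonneg (a - b)]

namespace SimpleGraph

variable {V : Type*} (G : SimpleGraph V) [DecidableRel G.Adj]

lemma isOddIndepSet_empty : IsOddIndepSet G ∅ :=
  ⟨by simp, fun _ _ => Or.inl (filter_empty _)⟩

lemma isOddIndepSet_singleton (v : V) : IsOddIndepSet G {v} :=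
  ⟨by simp, fun _ _ =>
    eq_empty_or_odd_card_of_card_le_one ((card_filter_le _ _).trans_eq (card_singleton v))⟩

variable [Fintype V]

lemma isStrongOddColoring_iff_forall_isOddIndepSet {n : ℕ} (c : V → Fin n) :
    IsStrongOddColoring G c ↔ ∀ k, IsOddIndepSet G (univ.filter fun v => c v = k) := by
  have hfiber : ∀ v k, ((univ.filter fun w => c w = k).filter fun u => G.Adj v u)
      = univ.filter fun u => G.Adj v u ∧ c u = k := fun v k => by ext u; simp [and_comm]
  constructor
  · intro hc k
    refine ⟨fun u hu v hv hadj => hc.1 u v hadj ?_, fun v _ => hfiber v k ▸ hc.2 v k⟩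
    simp only [mem_filter] at hu hv
    rw [hu.2, hv.2]
  · intro h
    refine ⟨fun u v hadj huv => (h (c v)).1 u (by simp [huv]) v (by simp) hadj, fun v k => ?_⟩
    by_cases hv : c v = k
    · -- neighbours of `v` cannot share its colour
      left
      rw [← hfiber, filter_eq_empty_iff]
      exact fun u hu => (h k).1 v (by simp [hv]) u hu
    · exact hfiber v k ▸ (h k).2 v (by simpa using hv)

variable {G}

lemma exists_isStrongOddColoring_of_isOddIndepSet {S : Finset V} (hS : IsOddIndepSet G S) :
    ∃ c : V → Fin (Fintype.card V - S.card + 1), IsStrongOddColoring G c := by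
  classical
  have hcard : Fintype.card {v // v ∉ S} = Fintype.card V - S.card := by
    rw [Fintype.card_subtype_compl, Fintype.card_coe]
  let e : {v // v ∉ S} ≃ Fin (Fintype.card V - S.card) := Fintype.equivFinOfCardEq hcard
  let c : V → Fin (Fintype.card V - S.card + 1) := fun v =>
    if h : v ∈ S then 0 else (e ⟨v, h⟩).succ
  have hzero : (univ.filter fun v => c v = 0) = S := by
    ext v; by_cases h : v ∈ S <;> simp [c, h, Fin.succ_ne_zero]
  have hsucc (j) : (univ.filter fun v => c v = j.succ) = {(e.symm j).1} := by
    ext v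
    by_cases h : v ∈ S
    · have hne : v ≠ (e.symm j).1 := fun hv => (e.symm j).2 (hv ▸ h)
      simp [c, h, hne, (Fin.succ_ne_zero j).symm]
    · simp only [c, h, dif_neg, not_false_eq_true, Fin.succ_inj, mem_filter, mem_univ, true_and,
        mem_singleton, ← Equiv.eq_symm_apply, Subtype.ext_iff]
  refine ⟨c, (isStrongOddColoring_iff_forall_isOddIndepSet G c).2 fun k => ?_⟩
  cases k using Fin.cases with
  | zero => rw [hzero]; exact hS
  | succ j => rw [hsucc]; exact isOddIndepSet_singleton G _

lemma bddAbove_card_isOddIndepSet :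
    BddAbove {k | ∃ S : Finset V, IsOddIndepSet G S ∧ S.card = k} :=
  ⟨Fintype.card V, by rintro k ⟨S, -, rfl⟩; exact S.card_le_univ⟩

lemma card_le_oddIndepNum {S : Finset V} (hS : IsOddIndepSet G S) : S.card ≤ oddIndepNum G :=
  le_csSup bddAbove_card_isOddIndepSet ⟨S, hS, rfl⟩

lemma exists_isOddIndepSet_card_eq_oddIndepNum :
    ∃ S : Finset V, IsOddIndepSet G S ∧ S.card = oddIndepNum G :=
  Nat.sSup_mem (s := {k | ∃ S : Finset V, IsOddIndepSet G S ∧ S.card = k})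
    ⟨0, ∅, isOddIndepSet_empty G, rfl⟩ bddAbove_card_isOddIndepSet

lemma oddIndepNum_le_card : oddIndepNum G ≤ Fintype.card V := by
  obtain ⟨S, -, hS⟩ := exists_isOddIndepSet_card_eq_oddIndepNum (G := G)
  exact hS ▸ S.card_le_univ

lemma strongOddChromNum_le_of_isOddIndepSet {S : Finset V} (hS : IsOddIndepSet G S) :
    strongOddChromNum G ≤ Fintype.card V - S.card + 1 :=
  Nat.sInf_le (exists_isStrongOddColoring_of_isOddIndepSet hS)

lemma exists_isStrongOddColoring_strongOddChromNum :
    ∃ c : V → Fin (strongOddChromNum G), IsStrongOddColoring G c :=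
  Nat.sInf_mem (s := {m | ∃ c : V → Fin m, IsStrongOddColoring G c})
    ⟨_, exists_isStrongOddColoring_of_isOddIndepSet (isOddIndepSet_empty G)⟩

lemma card_le_oddIndepNum_mul_of_isStrongOddColoring {n : ℕ} {c : V → Fin n}
    (hc : IsStrongOddColoring G c) : Fintype.card V ≤ oddIndepNum G * n := by
  have hclass (k : Fin n) :=
    card_le_oddIndepNum ((isStrongOddColoring_iff_forall_isOddIndepSet G c).1 hc k)
  calc Fintype.card V = ∑ k, (univ.filter fun v => c v = k).card :=
        (card_eq_sum_card_fiberwise fun v _ => mem_univ (c v)).trans rfl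
    _ ≤ ∑ _k : Fin n, oddIndepNum G := sum_le_sum fun k _ => hclass k
    _ = oddIndepNum G * n := by simp [mul_comm]

lemma oddIndepNum_add_strongOddChromNum_le :
    oddIndepNum G + strongOddChromNum G ≤ Fintype.card V + 1 := by
  obtain ⟨S, hS, hcard⟩ := exists_isOddIndepSet_card_eq_oddIndepNum (G := G)
  have hχ := strongOddChromNum_le_of_isOddIndepSet hS
  have hα := oddIndepNum_le_card (G := G)
  omega

end SimpleGraph

theorem card_le_oddIndepNum_mul_strongOddChromNum_general
    {V : Type*} [Fintype V] (G : SimpleGraph V) [DecidableRel G.Adj] :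
    Fintype.card V ≤ oddIndepNum G * strongOddChromNum G ∧
    (oddIndepNum G * strongOddChromNum G : ℝ) ≤ (Fintype.card V + 1) ^ 2 / 4 := by
  obtain ⟨c, hc⟩ := G.exists_isStrongOddColoring_strongOddChromNum
  refine ⟨G.card_le_oddIndepNum_mul_of_isStrongOddColoring hc, ?_⟩
  exact mul_le_sq_div_four_of_add_le (Nat.cast_nonneg _) (Nat.cast_nonneg _)
    (by exact_mod_cast G.oddIndepNum_add_strongOddChromNum_le)

/-- For every finite simple graph `G` on `n ≥ 1` vertices,
`n ≤ αod(G) · χso(G) ≤ (n+1)²/4`. -/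
theorem card_le_oddIndepNum_mul_strongOddChromNum
    {V : Type*} [Fintype V] [DecidableEq V] (G : SimpleGraph V) [DecidableRel G.Adj]
    (hn : 1 ≤ Fintype.card V) :
    Fintype.card V ≤ oddIndepNum G * strongOddChromNum G ∧
    (oddIndepNum G * strongOddChromNum G : ℝ) ≤ (Fintype.card V + 1) ^ 2 / 4 :=
  card_le_oddIndepNum_mul_strongOddChromNum_general G
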